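/- arXiv:1707.05440 — 2 statements merged into one kernel-verified Lean document; each statement's English description precedes it below -/
import Mathlib

section
/- Let S be a finite set of points in the plane in general position, and suppose S contains a crossing family of size k (a set of k segments with endpoints in S, any two of which cross). Then there exist k pairwise edge-disjoint plane spanning trees of S. -/
/-- Points in the plane. -/
abbrev Pt : Type := ℝ × ℝ

/-- A finite point set is in general position if no three of its points are collinear. -/
def GenPos (S : Finset Pt) : Prop :=
  ∀ p ∈ S, ∀ q ∈ S, ∀ r ∈ S, p ≠ q → p ≠ r → q ≠ r →
    ¬ Collinear ℝ ({p, q, r} : Set Pt)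

/-- A geometric graph on `S` (a simple graph on the points of `S`, edges drawn as
straight segments) is plane if the open segments of any two distinct edges are disjoint. -/
def IsPlaneGraph {S : Finset Pt} (G : SimpleGraph {x // x ∈ S}) : Prop :=
  ∀ a b c d : {x // x ∈ S}, G.Adj a b → G.Adj c d → s(a, b) ≠ s(c, d) →
    openSegment ℝ (a : Pt) (b : Pt) ∩ openSegment ℝ (c : Pt) (d : Pt) = ∅

/-- A plane spanning tree of `S`: a tree on all points of `S` drawn without crossings. -/
def IsPlaneSpanningTree {S : Finset Pt} (G : SimpleGraph {x // x ∈ S}) : Prop :=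
  G.IsTree ∧ IsPlaneGraph G

/-- A plane spanning path of `S`: a plane spanning tree in which every vertex
has degree at most two (i.e. a plane Hamiltonian path). -/
def IsPlaneSpanningPath {S : Finset Pt} (G : SimpleGraph {x // x ∈ S}) : Prop :=
  IsPlaneSpanningTree G ∧
    ∀ v a b c : {x // x ∈ S}, G.Adj v a → G.Adj v b → G.Adj v c →
      (a = b ∨ a = c ∨ b = c)

/-- The open segment spanned by an unordered pair of points. -/
def segOpen (e : Sym2 Pt) : Set Pt :=
  Sym2.lift ⟨fun a b => openSegment ℝ a b, fun a b => openSegment_symm ℝ a b⟩ e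

/-- `F` is a crossing family in `S`: a set of nondegenerate segments with endpoints
in `S`, any two of which cross (their open segments intersect). -/
def IsCrossingFamily (S : Finset Pt) (F : Finset (Sym2 Pt)) : Prop :=
  (∀ e ∈ F, ¬ e.IsDiag ∧ ∀ x ∈ e, x ∈ S) ∧
  (∀ e ∈ F, ∀ f ∈ F, e ≠ f → (segOpen e ∩ segOpen f).Nonempty)

/-- `x` lies strictly to the left of the directed line from `p` to `q`. -/
def leftOf (p q x : Pt) : Prop :=
  0 < (q.1 - p.1) * (x.2 - p.2) - (q.2 - p.2) * (x.1 - p.1)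

/-- `x` lies strictly to the right of the directed line from `p` to `q`. -/
def rightOf (p q x : Pt) : Prop :=
  (q.1 - p.1) * (x.2 - p.2) - (q.2 - p.2) * (x.1 - p.1) < 0

/-- The double star on `S` associated with the directed edge `pq`: the edge `pq`,
the edges from `p` to all points strictly left of the directed line `pq`, and the
edges from `q` to all points strictly right of it. -/
def doubleStar (S : Finset Pt) (p q : Pt) : SimpleGraph {x // x ∈ S} :=
  SimpleGraph.fromRel fun a b =>
    ((a : Pt) = p ∧ (b : Pt) = q) ∨
    ((a : Pt) = p ∧ leftOf p q (b : Pt)) ∨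
    ((a : Pt) = q ∧ rightOf p q (b : Pt))

/-- The regular wheel configuration `W_{2n}`: `2n-1` points regularly spaced on the
unit circle together with its center. -/
noncomputable def wheel (n : ℕ) : Finset Pt :=
  insert ((0 : ℝ), (0 : ℝ)) <| (Finset.range (2 * n - 1)).image fun j : ℕ =>
    (Real.cos (2 * Real.pi * (j : ℝ) / ((2 * n - 1 : ℕ) : ℝ)),
     Real.sin (2 * Real.pi * (j : ℝ) / ((2 * n - 1 : ℕ) : ℝ)))

/-! For a segment `pq` with endpoints in `S`, the double star `T(pq)` (the edge `pq`, the edges from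
`p` to the points left of the line `pq` and those from `q` to the points right of it) is a plane
spanning tree: by general position every other point is a leaf hanging from `p` or from `q`, the
three kinds of edges lie on the line and in its two open half-planes, and two edges from a common
apex overlap only if collinear. If `pq` and `p'q'` cross, each pair of endpoints is separated by
the other line, and the sides are tied together by the sign of `(q - p) × (q' - p')`. An edge
shared by `T(pq)` and `T(p'q')` must join a hub of one to a hub of the other, and the sign
bookkeeping shows it is attached to the wrong hub in one of the two trees.
-/

open SimpleGraph

def cross (u v : Pt) : ℝ := u.1 * v.2 - u.2 * v.1

/-- Twice the signed area of the triangle `pqx`. -/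
def orient (p q x : Pt) : ℝ := cross (q - p) (x - p)

section Orientation

variable {p q p' q' a b x r : Pt}

lemma cross_swap (u v : Pt) : cross v u = -cross u v := by
  simp only [cross]; ring

lemma leftOf_iff : leftOf p q x ↔ 0 < orient p q x := Iff.rfl

lemma rightOf_iff : rightOf p q x ↔ orient p q x < 0 := Iff.rfl

@[simp] lemma orient_self_left (p q : Pt) : orient p q p = 0 := by
  simp [orient, cross]

@[simp] lemma orient_self_right (p q : Pt) : orient p q q = 0 := by
  simp only [orient, cross]; ring

lemma exists_eq_of_mem_openSegment {E : Type*} [AddCommGroup E] [Module ℝ E] {a b x : E}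
    (h : x ∈ openSegment ℝ a b) :
    ∃ t : ℝ, 0 < t ∧ t < 1 ∧ x = (1 - t) • a + t • b := by
  rw [openSegment_eq_image] at h
  obtain ⟨t, ⟨ht₀, ht₁⟩, rfl⟩ := h
  exact ⟨t, ht₀, ht₁, rfl⟩

lemma orient_of_mem_openSegment (p q : Pt) (h : x ∈ openSegment ℝ a b) :
    ∃ t : ℝ, 0 < t ∧ t < 1 ∧ orient p q x = (1 - t) * orient p q a + t * orient p q b := by
  obtain ⟨t, ht₀, ht₁, rfl⟩ := exists_eq_of_mem_openSegment h
  exact ⟨t, ht₀, ht₁, by simp only [orient, cross, Prod.fst_add, Prod.snd_add, Prod.smul_fst,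
    Prod.smul_snd, Prod.fst_sub, Prod.snd_sub, smul_eq_mul]; ring⟩

/-- `t` is the parameter of the meeting point on `p'q'`. -/
lemma orient_of_mem_openSegment_inter (h : x ∈ openSegment ℝ p q)
    (h' : x ∈ openSegment ℝ p' q') :
    ∃ t : ℝ, 0 < t ∧ t < 1 ∧ orient p q p' = -(t * cross (q - p) (q' - p')) ∧
      orient p q q' = (1 - t) * cross (q - p) (q' - p') := by
  obtain ⟨s, -, -, rfl⟩ := exists_eq_of_mem_openSegment h
  obtain ⟨t, ht₀, ht₁, hx⟩ := exists_eq_of_mem_openSegment h'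
  obtain ⟨h₁, h₂⟩ := Prod.ext_iff.1 hx
  simp only [Prod.fst_add, Prod.snd_add, Prod.smul_fst, Prod.smul_snd, smul_eq_mul] at h₁ h₂
  refine ⟨t, ht₀, ht₁, ?_, ?_⟩ <;>
  · simp only [orient, cross, Prod.fst_sub, Prod.snd_sub]
    linear_combination (q.2 - p.2) * h₁ - (q.1 - p.1) * h₂

lemma orient_eq_zero_of_mem_openSegment_inter (h : x ∈ openSegment ℝ p a)
    (h' : x ∈ openSegment ℝ p b) : orient p a b = 0 := by
  obtain ⟨t, ht₀, -, hp, -⟩ := orient_of_mem_openSegment_inter h h'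
  rw [orient_self_left, zero_eq_neg, mul_eq_zero] at hp
  exact hp.resolve_left ht₀.ne'

lemma collinear_of_orient_eq_zero (h : orient p q r = 0) : Collinear ℝ ({p, q, r} : Set Pt) := by
  rcases eq_or_ne p q with rfl | hpq
  · simpa using collinear_pair ℝ p r
  rw [collinear_iff_of_mem (p₀ := p) (by simp)]
  refine ⟨q - p, ?_⟩
  simp only [Set.mem_insert_iff, Set.mem_singleton_iff, forall_eq_or_imp, forall_eq]
  refine ⟨⟨0, by simp⟩, ⟨1, by simp⟩, ?_⟩
  simp only [orient, cross, Prod.fst_sub, Prod.snd_sub] at h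
  have hcoord : q.1 - p.1 ≠ 0 ∨ q.2 - p.2 ≠ 0 := by
    by_contra! h₀
    exact hpq (Prod.ext (by linarith [h₀.1]) (by linarith [h₀.2])).symm
  simp only [Prod.ext_iff, vadd_eq_add, Prod.fst_add, Prod.snd_add, Prod.smul_fst, Prod.smul_snd,
    Prod.fst_sub, Prod.snd_sub, smul_eq_mul]
  rcases hcoord with h₁ | h₂
  · exact ⟨(r.1 - p.1) / (q.1 - p.1), by field_simp; ring,
      by field_simp; linear_combination h⟩
  · exact ⟨(r.2 - p.2) / (q.2 - p.2), by field_simp; linear_combination -h,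
      by field_simp; ring⟩

end Orientation

lemma GenPos.eq_or_eq_of_orient_eq_zero {S : Finset Pt} (hgp : GenPos S) {p q r : Pt}
    (hp : p ∈ S) (hq : q ∈ S) (hr : r ∈ S) (hpq : p ≠ q) (h : orient p q r = 0) :
    r = p ∨ r = q := by
  by_contra! hr'
  exact hgp p hp q hq r hr hpq (Ne.symm hr'.1) (Ne.symm hr'.2) (collinear_of_orient_eq_zero h)

/-- A cycle has at least three vertices, and each of them has two distinct neighbours on it. -/
lemma SimpleGraph.isAcyclic_of_neighborSet_subsingleton {V : Type*} {G : SimpleGraph V} (x y : V)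
    (h : ∀ v, v ≠ x → v ≠ y → (G.neighborSet v).Subsingleton) : G.IsAcyclic := by
  classical
  intro u c hc
  obtain ⟨w, hw, hwxy⟩ : ∃ w ∈ c.support.tail.toFinset, w ∉ ({x, y} : Finset V) := by
    apply Finset.exists_mem_notMem_of_card_lt_card
    rw [List.toFinset_card_of_nodup hc.support_nodup, List.length_tail, Walk.length_support]
    have := hc.three_le_length
    have := Finset.card_le_two (a := x) (b := y)
    omega
  simp only [Finset.mem_insert, Finset.mem_singleton, not_or] at hwxy
  have hc' := (Walk.isCycle_rotate (List.mem_of_mem_tail (List.mem_toFinset.1 hw))).2 hc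
  exact hc'.snd_ne_penultimate (h w hwxy.1 hwxy.2 (Walk.adj_snd hc'.not_nil)
    (Walk.adj_penultimate hc'.not_nil).symm)

lemma GenPos.eq_of_mem_openSegment_inter {S : Finset Pt} (hgp : GenPos S) {u v v' z : Pt}
    (hu : u ∈ S) (hv : v ∈ S) (hv' : v' ∈ S) (huv : u ≠ v) (huv' : u ≠ v')
    (hz : z ∈ openSegment ℝ u v) (hz' : z ∈ openSegment ℝ u v') : v = v' := by
  have := hgp.eq_or_eq_of_orient_eq_zero hu hv hv' huv
    (orient_eq_zero_of_mem_openSegment_inter hz hz')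
  exact (this.resolve_left huv'.symm).symm

/-- The edges of `doubleStar S p q`, each directed away from its end in `{p, q}`. -/
def starRel (p q u v : Pt) : Prop :=
  (u = p ∧ v = q) ∨ (u = p ∧ leftOf p q v) ∨ (u = q ∧ rightOf p q v)

section DoubleStar

variable {S : Finset Pt} {p q p' q' u v u' v' x z : Pt}

lemma doubleStar_adj {a b : {x // x ∈ S}} :
    (doubleStar S p q).Adj a b ↔ a ≠ b ∧ (starRel p q a b ∨ starRel p q b a) := Iff.rfl

lemma doubleStar_adj_of_ne {v a : {x // x ∈ S}} (hvp : (v : Pt) ≠ p) (hvq : (v : Pt) ≠ q)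
    (h : (doubleStar S p q).Adj v a) :
    ((a : Pt) = p ∧ leftOf p q v) ∨ ((a : Pt) = q ∧ rightOf p q v) := by
  obtain ⟨-, h | h⟩ := doubleStar_adj.1 h
  · rcases h with ⟨hv, -⟩ | ⟨hv, -⟩ | ⟨hv, -⟩
    exacts [absurd hv hvp, absurd hv hvp, absurd hv hvq]
  · rcases h with ⟨-, hv⟩ | ⟨ha, hl⟩ | ⟨ha, hr⟩
    exacts [absurd hv hvq, .inl ⟨ha, hl⟩, .inr ⟨ha, hr⟩]

lemma doubleStar_connected (hgp : GenPos S) (hp : p ∈ S) (hq : q ∈ S) (hpq : p ≠ q) :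
    (doubleStar S p q).Connected := by
  have hadj {v w : {x // x ∈ S}} (hne : v ≠ w) (h : starRel p q v w) :
      (doubleStar S p q).Adj v w :=
    doubleStar_adj.2 ⟨hne, .inl h⟩
  have hpq' : (doubleStar S p q).Adj ⟨p, hp⟩ ⟨q, hq⟩ :=
    hadj (by simpa using hpq) (.inl ⟨rfl, rfl⟩)
  refine (connected_iff_exists_forall_reachable _).2 ⟨⟨p, hp⟩, fun w => ?_⟩
  by_cases hwp : ⟨p, hp⟩ = w
  · exact hwp ▸ .rfl
  by_cases hwq : ⟨q, hq⟩ = w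
  · exact hwq ▸ hpq'.reachable
  have hw : orient p q w ≠ 0 := fun h =>
    (hgp.eq_or_eq_of_orient_eq_zero hp hq w.2 hpq h).elim
      (fun h => hwp (Subtype.ext h.symm)) (fun h => hwq (Subtype.ext h.symm))
  rcases hw.lt_or_gt with hright | hleft
  · exact hpq'.reachable.trans (hadj hwq (.inr (.inr ⟨rfl, hright⟩))).reachable
  · exact (hadj hwp (.inr (.inl ⟨rfl, hleft⟩))).reachable

lemma doubleStar_isAcyclic (hp : p ∈ S) (hq : q ∈ S) : (doubleStar S p q).IsAcyclic := by
  refine isAcyclic_of_neighborSet_subsingleton ⟨p, hp⟩ ⟨q, hq⟩ fun v hvp hvq a ha b hb => ?_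
  have hvp : (v : Pt) ≠ p := fun h => hvp (Subtype.ext h)
  have hvq : (v : Pt) ≠ q := fun h => hvq (Subtype.ext h)
  rcases doubleStar_adj_of_ne hvp hvq ha with ⟨ha, hl⟩ | ⟨ha, hr⟩ <;>
    rcases doubleStar_adj_of_ne hvp hvq hb with ⟨hb, hl'⟩ | ⟨hb, hr'⟩
  · exact Subtype.ext (ha.trans hb.symm)
  · exact absurd hl (rightOf_iff.1 hr').not_gt
  · exact absurd hl' (rightOf_iff.1 hr).not_gt
  · exact Subtype.ext (ha.trans hb.symm)

lemma starRel.orient_of_mem_openSegment (h : starRel p q u v) (hz : z ∈ openSegment ℝ u v) :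
    (u = p ∧ v = q ∧ orient p q z = 0) ∨ (u = p ∧ u ≠ v ∧ 0 < orient p q z) ∨
      (u = q ∧ u ≠ v ∧ orient p q z < 0) := by
  obtain ⟨t, ht₀, ht₁, hzt⟩ := _root_.orient_of_mem_openSegment p q hz
  rcases h with ⟨rfl, rfl⟩ | ⟨rfl, hv⟩ | ⟨rfl, hv⟩
  · simp_all
  · refine .inr (.inl ⟨rfl, ?_, ?_⟩)
    · rintro rfl; simp [leftOf_iff] at hv
    · rw [leftOf_iff] at hv; simp only [orient_self_left] at hzt; nlinarith
  · refine .inr (.inr ⟨rfl, ?_, ?_⟩)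
    · rintro rfl; simp [rightOf_iff] at hv
    · rw [rightOf_iff] at hv; simp only [orient_self_right] at hzt; nlinarith

lemma starRel.openSegment_inter_eq_empty (hgp : GenPos S) (hu : u ∈ S) (hv : v ∈ S)
    (hv' : v' ∈ S) (h : starRel p q u v) (h' : starRel p q u' v') (hne : s(u, v) ≠ s(u', v')) :
    openSegment ℝ u v ∩ openSegment ℝ u' v' = ∅ := by
  refine Set.eq_empty_iff_forall_notMem.2 fun z ⟨hz, hz'⟩ => ?_
  rcases h.orient_of_mem_openSegment hz with
    ⟨hu₁, hv₁, h₀⟩ | ⟨hu₁, huv, h₀⟩ | ⟨hu₁, huv, h₀⟩ <;>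
  rcases h'.orient_of_mem_openSegment hz' with
    ⟨hu₂, hv₂, h₀'⟩ | ⟨hu₂, huv', h₀'⟩ | ⟨hu₂, huv', h₀'⟩ <;>
  try linarith
  · exact hne (by rw [hu₁, hv₁, hu₂, hv₂])
  all_goals
    obtain rfl : u = u' := hu₁.trans hu₂.symm
    exact hne (by rw [hgp.eq_of_mem_openSegment_inter hu hv hv' huv huv' hz hz'])

lemma doubleStar_isPlaneGraph (hgp : GenPos S) : IsPlaneGraph (doubleStar S p q) := by
  have key {a b c d : {x // x ∈ S}} (hab : starRel p q a b) (hcd : starRel p q c d)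
      (hne : s(a, b) ≠ s(c, d)) :
      openSegment ℝ (a : Pt) b ∩ openSegment ℝ (c : Pt) d = ∅ :=
    hab.openSegment_inter_eq_empty hgp a.2 b.2 d.2 hcd
      fun h => hne (Sym2.map.injective Subtype.val_injective h)
  intro a b c d hab hcd hne
  rcases (doubleStar_adj.1 hab).2 with hab | hab <;> rcases (doubleStar_adj.1 hcd).2 with hcd | hcd
  · exact key hab hcd hne
  · rw [openSegment_symm ℝ (c : Pt)]; exact key hab hcd (by rwa [Sym2.eq_swap (a := d)])
  · rw [openSegment_symm ℝ (a : Pt)]; exact key hab hcd (by rwa [Sym2.eq_swap (a := b)])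
  · rw [openSegment_symm ℝ (a : Pt), openSegment_symm ℝ (c : Pt)]
    exact key hab hcd (by rwa [Sym2.eq_swap (a := b), Sym2.eq_swap (a := d)])

lemma doubleStar_isPlaneSpanningTree (hgp : GenPos S) (hp : p ∈ S) (hq : q ∈ S)
    (hpq : p ≠ q) : IsPlaneSpanningTree (doubleStar S p q) :=
  ⟨⟨doubleStar_connected hgp hp hq hpq, doubleStar_isAcyclic hp hq⟩,
    doubleStar_isPlaneGraph hgp⟩

lemma doubleStar_adj_mem {a b : {x // x ∈ S}} (h : (doubleStar S p q).Adj a b) :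
    ((a : Pt) = p ∨ (a : Pt) = q) ∨ ((b : Pt) = p ∨ (b : Pt) = q) := by
  rcases h with ⟨-, (⟨h, -⟩ | ⟨h, -⟩ | ⟨h, -⟩) | (⟨h, -⟩ | ⟨h, -⟩ | ⟨h, -⟩)⟩ <;>
    simp [h]

lemma GenPos.cross_ne_zero_of_mem_openSegment_inter (hgp : GenPos S) (hp : p ∈ S) (hq : q ∈ S)
    (hp' : p' ∈ S) (hq' : q' ∈ S) (hpq : p ≠ q) (hpq' : p' ≠ q') (hne : s(p, q) ≠ s(p', q'))
    (hx : x ∈ openSegment ℝ p q) (hx' : x ∈ openSegment ℝ p' q') :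
    cross (q - p) (q' - p') ≠ 0 := by
  intro hD
  obtain ⟨t, -, -, hp't, hq't⟩ := orient_of_mem_openSegment_inter hx hx'
  rw [hD, mul_zero, neg_zero] at hp't
  rw [hD, mul_zero] at hq't
  rcases hgp.eq_or_eq_of_orient_eq_zero hp hq hp' hpq hp't with rfl | rfl <;>
  rcases hgp.eq_or_eq_of_orient_eq_zero hp hq hq' hpq hq't with rfl | rfl
  exacts [hpq' rfl, hne rfl, hne Sym2.eq_swap, hpq' rfl]

/-- If `pq` and `p'q'` cross with `cross (q - p) (q' - p') > 0`, then `T(pq)` joins `p` to `q'`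
and `q` to `p'`, while `T(p'q')` joins `p'` to `p` and `q'` to `q`; the other sign is symmetric. -/
lemma doubleStar_disjoint_edgeSet (hgp : GenPos S) (hp : p ∈ S) (hq : q ∈ S) (hp' : p' ∈ S)
    (hq' : q' ∈ S) (hpq : p ≠ q) (hpq' : p' ≠ q') (hne : s(p, q) ≠ s(p', q'))
    (hx : x ∈ openSegment ℝ p q) (hx' : x ∈ openSegment ℝ p' q') :
    Disjoint (doubleStar S p q).edgeSet (doubleStar S p' q').edgeSet := by
  obtain ⟨t, ht₀, ht₁, hp't, hq't⟩ := orient_of_mem_openSegment_inter hx hx'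
  obtain ⟨s, hs₀, hs₁, hps, hqs⟩ := orient_of_mem_openSegment_inter hx' hx
  simp only [cross_swap (q - p), mul_neg, neg_neg] at hps hqs
  have hD := hgp.cross_ne_zero_of_mem_openSegment_inter hp hq hp' hq' hpq hpq' hne hx hx'
  set D := cross (q - p) (q' - p')
  have hp₀ : orient p' q' p ≠ 0 := by rw [hps]; exact mul_ne_zero hs₀.ne' hD
  have hq₀ : orient p' q' q ≠ 0 := by
    rw [hqs]; exact neg_ne_zero.2 (mul_ne_zero (by linarith) hD)
  have hp'₀ : orient p q p' ≠ 0 := by rw [hp't]; exact neg_ne_zero.2 (mul_ne_zero ht₀.ne' hD)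
  have hq'₀ : orient p q q' ≠ 0 := by rw [hq't]; exact mul_ne_zero (by linarith) hD
  have key (a b : {x // x ∈ S}) (ha : (a : Pt) = p ∨ (a : Pt) = q)
      (hab : (doubleStar S p q).Adj b a) (hab' : (doubleStar S p' q').Adj a b) : False := by
    have ha₀ : orient p' q' a ≠ 0 := by rcases ha with h | h <;> rwa [h]
    have hbp : (b : Pt) = p' ∨ (b : Pt) = q' := by
      rcases doubleStar_adj_of_ne (fun h => ha₀ (by simp [h])) (fun h => ha₀ (by simp [h])) hab'
        with ⟨h, -⟩ | ⟨h, -⟩ <;> simp [h]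
    have hb₀ : orient p q b ≠ 0 := by rcases hbp with h | h <;> rwa [h]
    rcases doubleStar_adj_of_ne (fun h => hb₀ (by simp [h])) (fun h => hb₀ (by simp [h])) hab
      with ⟨ha, hsa⟩ | ⟨ha, hsa⟩ <;>
    rcases doubleStar_adj_of_ne (fun h => ha₀ (by simp [h])) (fun h => ha₀ (by simp [h])) hab'
      with ⟨hb, hsb⟩ | ⟨hb, hsb⟩ <;>
    simp only [leftOf_iff, rightOf_iff, ha, hb, hp't, hq't, hps, hqs] at hsa hsb <;>
    nlinarith
  refine Set.disjoint_left.2 fun e he he' => ?_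
  induction e using Sym2.ind with
  | _ a b =>
    rcases doubleStar_adj_mem he with ha | hb
    · exact key a b ha he.symm he'
    · exact key b a hb he he'.symm

end DoubleStar

lemma Sym2.mk_out_fst_out_snd {α : Type*} (e : Sym2 α) : s(e.out.1, e.out.2) = e := e.out_eq

lemma IsCrossingFamily.exists_endpoints {S : Finset Pt} {F : Finset (Sym2 Pt)}
    (hF : IsCrossingFamily S F) :
    ∃ p q : Fin F.card → Pt, (∀ i, p i ∈ S ∧ q i ∈ S ∧ p i ≠ q i) ∧
      ∀ i j, i ≠ j → s(p i, q i) ≠ s(p j, q j) ∧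
        (openSegment ℝ (p i) (q i) ∩ openSegment ℝ (p j) (q j)).Nonempty := by
  let e (i : Fin F.card) : Sym2 Pt := F.equivFin.symm i
  have hseg (i) : segOpen (e i) = openSegment ℝ (e i).out.1 (e i).out.2 := by
    conv_lhs => rw [← (e i).mk_out_fst_out_snd]
    rfl
  refine ⟨fun i => (e i).out.1, fun i => (e i).out.2, fun i => ?_, fun i j hij => ?_⟩
  · obtain ⟨hdiag, hS⟩ := hF.1 (e i) (F.equivFin.symm i).2
    refine ⟨hS _ (e i).out_fst_mem, hS _ (e i).out_snd_mem, fun h => hdiag ?_⟩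
    rw [← (e i).mk_out_fst_out_snd, Sym2.mk_isDiag_iff]
    exact h
  · have hij' : e i ≠ e j := fun h => hij (F.equivFin.symm.injective (Subtype.ext h))
    simp only [Sym2.mk_out_fst_out_snd, ← hseg]
    exact ⟨hij', hF.2 _ (F.equivFin.symm i).2 _ (F.equivFin.symm j).2 hij'⟩

/-- If a point set `S` in general position contains a crossing family of
size `k`, then `S` admits `k` pairwise edge-disjoint plane spanning trees. -/
theorem crossing_family_gives_trees (S : Finset Pt) (hgp : GenPos S)
    (k : ℕ) (F : Finset (Sym2 Pt)) (hF : IsCrossingFamily S F) (hcard : F.card = k) :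
    ∃ T : Fin k → SimpleGraph {x // x ∈ S},
      (∀ i, IsPlaneSpanningTree (T i)) ∧
      (∀ i j, i ≠ j → Disjoint (T i).edgeSet (T j).edgeSet) := by
  subst hcard
  obtain ⟨p, q, hends, hcross⟩ := hF.exists_endpoints
  refine ⟨fun i => doubleStar S (p i) (q i), fun i => ?_, fun i j hij => ?_⟩
  · obtain ⟨hp, hq, hpq⟩ := hends i
    exact doubleStar_isPlaneSpanningTree hgp hp hq hpq
  · obtain ⟨hpi, hqi, hpqi⟩ := hends i
    obtain ⟨hpj, hqj, hpqj⟩ := hends j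
    obtain ⟨hne, x, hxi, hxj⟩ := hcross i j hij
    exact doubleStar_disjoint_edgeSet hgp hpi hqi hpj hqj hpqi hpqj hne hxi hxj
end

section
/- Let S be a finite set of points in the plane in general position and let p, q, r, s be four distinct points of S such that the segments pq and rs cross. For a directed edge uv with u, v ∈ S, let T_{uv} denote the double star on S whose edges are the segment uv, the segments from u to all points of S strictly left of the directed line from u to v, and the segments from v to all points of S strictly right of that line. Then the double stars T_{pq} and T_{rs} are edge-disjoint (they share no edge). -/
/-- Auxiliary determinant (twice signed area) of the triple `p q x`. -/
def det3 (p q x : Pt) : ℝ := (q.1 - p.1) * (x.2 - p.2) - (q.2 - p.2) * (x.1 - p.1)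

lemma collinear_of_det3 {p q r : Pt} (h : det3 p q r = 0) :
    Collinear ℝ ({p, q, r} : Set Pt) := by
  rcases eq_or_ne q p with hq | hq
  · have hset : ({p, q, r} : Set Pt) = {p, r} := by rw [hq]; simp
    rw [hset]; exact collinear_pair ℝ p r
  · have hk : ∃ k : ℝ, r.1 - p.1 = k * (q.1 - p.1) ∧ r.2 - p.2 = k * (q.2 - p.2) := by
      rcases eq_or_ne (q.1 - p.1) 0 with h1 | h1
      · have h2 : q.2 - p.2 ≠ 0 := by
          intro h2
          exact hq (by ext <;> linarith)
        refine ⟨(r.2 - p.2) / (q.2 - p.2), ?_, by field_simp⟩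
        rw [h1, mul_zero]
        have h3 : (q.2 - p.2) * (r.1 - p.1) = 0 := by
          unfold det3 at h; rw [h1] at h; linarith
        rcases mul_eq_zero.1 h3 with hc | hc
        · exact absurd hc h2
        · linarith
      · refine ⟨(r.1 - p.1) / (q.1 - p.1), by field_simp, ?_⟩
        unfold det3 at h
        field_simp
        linear_combination h
    obtain ⟨k, hk1, hk2⟩ := hk
    rw [collinear_iff_of_mem (Set.mem_insert p {q, r})]
    refine ⟨q - p, ?_⟩
    intro x hx
    rcases hx with rfl | rfl | rfl
    · exact ⟨0, by simp⟩
    · exact ⟨1, by simp⟩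
    · refine ⟨k, ?_⟩
      have hv : (k • (q - p) +ᵥ p : Pt) = (k * (q.1 - p.1) + p.1, k * (q.2 - p.2) + p.2) := by
        simp [Prod.ext_iff, smul_eq_mul]
      rw [hv, Prod.ext_iff]
      constructor
      · simp; linarith
      · simp; linarith

lemma cross_dets {p q r s : Pt}
    (h : (openSegment ℝ p q ∩ openSegment ℝ r s).Nonempty)
    (hA : det3 p q r ≠ 0) (hC : det3 r s p ≠ 0) :
    det3 p q r * det3 p q s < 0 ∧
    det3 p q r * det3 r s p < 0 ∧
    det3 r s p * det3 r s q < 0 := by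
  obtain ⟨z, hz1, hz2⟩ := h
  rw [openSegment_eq_image] at hz1 hz2
  obtain ⟨t, ht, rfl⟩ := hz1
  obtain ⟨u, hu, huz⟩ := hz2
  obtain ⟨ht0, ht1⟩ := ht
  obtain ⟨hu0, hu1⟩ := hu
  have e1 : (1 - u) * r.1 + u * s.1 = (1 - t) * p.1 + t * q.1 := by
    have := congrArg Prod.fst huz
    simpa [smul_eq_mul] using this
  have e2 : (1 - u) * r.2 + u * s.2 = (1 - t) * p.2 + t * q.2 := by
    have := congrArg Prod.snd huz
    simpa [smul_eq_mul] using this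
  set A := det3 p q r with hA'
  set B := det3 p q s with hB'
  set C := det3 r s p with hC'
  set D := det3 r s q with hD'
  have h1 : u * B + (1 - u) * A = 0 := by
    simp only [hA', hB', det3]
    linear_combination (q.1 - p.1) * e2 - (q.2 - p.2) * e1
  have h2 : t * D + (1 - t) * C = 0 := by
    simp only [hC', hD', det3]
    linear_combination (s.2 - r.2) * e1 - (s.1 - r.1) * e2
  have h3 : u * C + t * A = 0 := by
    simp only [hA', hB', hC', hD', det3] at h1 h2 ⊢
    linear_combination u * h2 + t * h1
  have hAA : 0 < A * A := mul_self_pos.2 hA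
  have hCC : 0 < C * C := mul_self_pos.2 hC
  have k1 : u * (A * B) = -((1 - u) * (A * A)) := by linear_combination A * h1
  have k2 : u * (A * C) = -(t * (A * A)) := by linear_combination A * h3
  have k3 : t * (C * D) = -((1 - t) * (C * C)) := by linear_combination C * h2
  refine ⟨?_, ?_, ?_⟩
  · nlinarith [k1, hAA, hu0, hu1]
  · nlinarith [k2, hAA, hu0, ht0]
  · nlinarith [k3, hCC, ht0, ht1]

set_option maxHeartbeats 2000000 in
lemma star_cases {p q r s a b : Pt}
    (hpq : p ≠ q) (hpr : p ≠ r) (hps : p ≠ s) (hqr : q ≠ r) (hqs : q ≠ s) (hrs : r ≠ s)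
    (hAB : det3 p q r * det3 p q s < 0)
    (hAC : det3 p q r * det3 r s p < 0)
    (hCD : det3 r s p * det3 r s q < 0)
    (hAD : 0 < det3 p q r * det3 r s q)
    (hBC : 0 < det3 p q s * det3 r s p)
    (hBD : det3 p q s * det3 r s q < 0)
    (h1 : ((a = p ∧ b = q) ∨ (a = p ∧ leftOf p q b) ∨ (a = q ∧ rightOf p q b)) ∨
          ((b = p ∧ a = q) ∨ (b = p ∧ leftOf p q a) ∨ (b = q ∧ rightOf p q a)))
    (h2 : ((a = r ∧ b = s) ∨ (a = r ∧ leftOf r s b) ∨ (a = s ∧ rightOf r s b)) ∨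
          ((b = r ∧ a = s) ∨ (b = r ∧ leftOf r s a) ∨ (b = s ∧ rightOf r s a))) :
    False := by
  simp only [det3] at hAB hAC hCD hAD hBC hBD
  rcases h1 with (⟨h, h'⟩ | ⟨h, h'⟩ | ⟨h, h'⟩) | (⟨h, h'⟩ | ⟨h, h'⟩ | ⟨h, h'⟩) <;>
  rcases h2 with (⟨g, g'⟩ | ⟨g, g'⟩ | ⟨g, g'⟩) | (⟨g, g'⟩ | ⟨g, g'⟩ | ⟨g, g'⟩) <;>
  subst_vars <;>
  first
    | exact hpq rfl | exact hpr rfl | exact hps rfl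
    | exact hqr rfl | exact hqs rfl | exact hrs rfl
    | (simp only [leftOf, rightOf] at h' g';
       first
         | linarith [mul_pos h' g', mul_pos g' h']
         | linarith [mul_pos_of_neg_of_neg h' g', mul_pos_of_neg_of_neg g' h']
         | linarith [mul_neg_of_pos_of_neg h' g', mul_neg_of_pos_of_neg g' h']
         | linarith [mul_neg_of_neg_of_pos h' g', mul_neg_of_neg_of_pos g' h']
         | nlinarith [h', g'])

/-- If the segments `pq` and `rs` cross (with `p, q, r, s ∈ S` pairwise
distinct), then the double stars `T_{pq}` and `T_{rs}` are edge-disjoint. -/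
theorem doubleStars_edgeDisjoint (S : Finset Pt) (hgp : GenPos S)
    (p q r s : Pt) (hp : p ∈ S) (hq : q ∈ S) (hr : r ∈ S) (hs : s ∈ S)
    (hpq : p ≠ q) (hpr : p ≠ r) (hps : p ≠ s) (hqr : q ≠ r) (hqs : q ≠ s) (hrs : r ≠ s)
    (hcross : (openSegment ℝ p q ∩ openSegment ℝ r s).Nonempty) :
    Disjoint (doubleStar S p q).edgeSet (doubleStar S r s).edgeSet := by
  have hA : det3 p q r ≠ 0 := fun h =>
    hgp p hp q hq r hr hpq hpr hqr (collinear_of_det3 h)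
  have hB : det3 p q s ≠ 0 := fun h =>
    hgp p hp q hq s hs hpq hps hqs (collinear_of_det3 h)
  have hC : det3 r s p ≠ 0 := fun h =>
    hgp r hr s hs p hp hrs hpr.symm hps.symm (collinear_of_det3 h)
  obtain ⟨hAB, hAC, hCD⟩ := cross_dets hcross hA hC
  have hCC : 0 < det3 r s p * det3 r s p := mul_self_pos.2 hC
  have hAA : 0 < det3 p q r * det3 p q r := mul_self_pos.2 hA
  have hAD : 0 < det3 p q r * det3 r s q := by
    nlinarith [mul_pos_of_neg_of_neg hAC hCD, hCC]
  have hBC : 0 < det3 p q s * det3 r s p := by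
    nlinarith [mul_pos_of_neg_of_neg hAB hAC, hAA]
  have hBD : det3 p q s * det3 r s q < 0 := by
    nlinarith [mul_neg_of_neg_of_pos hAB hAD, hAA]
  rw [Set.disjoint_left]
  intro e he1 he2
  revert he1 he2
  induction e using Sym2.ind with
  | _ a b =>
    intro he1 he2
    rw [SimpleGraph.mem_edgeSet, doubleStar, SimpleGraph.fromRel_adj] at he1 he2
    exact star_cases hpq hpr hps hqr hqs hrs hAB hAC hCD hAD hBC hBD he1.2 he2.2
end
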